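/- arXiv:1509.00976 — 3 statements merged into one kernel-verified Lean document; each statement's English description precedes it below -/
import Mathlib

section
/- Let (Ω, μ) be a probability space and let P : Ω → ℝ be a nonnegative random variable such that √P is integrable and √P · arctan(b·√P) is integrable, where b = √s / r₀² for given positive reals s and r₀. Then for every λ > 0: exp(−π·λ·√s · E[√P · arctan(b·√P)]) ≤ exp(−π·λ·√s · E[√P] · arctan(b · E[√P])). In particular the Laplace-transform expression exp(−πλ√s E[√P arctan(√(s/r₀⁴)·√P)]) is upper-bounded by exp(−πλ√s·E[√P]·arctan(E[√P]·√(s/r₀⁴))). -/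
open Real MeasureTheory Set

/-!
The function `y ↦ y · arctan (b y)` is convex on `ℝ` for `b ≥ 0`: its derivative
`arctan (b y) + b y / (1 + (b y)²)` has derivative `2b / (1 + (b y)²)² ≥ 0`. Jensen's inequality
for this function and the random variable `√P` bounds the exponent from below, and
`t ↦ exp (-c t)` is antitone for `c = πλ√s ≥ 0`.
-/

lemma hasDerivAt_mul_arctan_const_mul (b x : ℝ) :
    HasDerivAt (fun y => y * arctan (b * y)) (arctan (b * x) + b * x / (1 + (b * x) ^ 2)) x := by
  refine ((hasDerivAt_id' x).fun_mul (hasDerivAt_const_mul b).arctan).congr_deriv ?_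
  field_simp

lemma hasDerivAt_arctan_const_mul_add_div (b x : ℝ) :
    HasDerivAt (fun y => arctan (b * y) + b * y / (1 + (b * y) ^ 2))
      (2 * b / (1 + (b * x) ^ 2) ^ 2) x := by
  have hden : HasDerivAt (fun y => 1 + (b * y) ^ 2) (2 * (b * x) * b) x := by
    simpa using ((hasDerivAt_const_mul b).pow 2).const_add 1
  refine ((hasDerivAt_const_mul b).arctan.fun_add
    ((hasDerivAt_const_mul b).fun_div hden (by positivity))).congr_deriv ?_
  field_simp
  ring

lemma convexOn_mul_arctan_const_mul {b : ℝ} (hb : 0 ≤ b) :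
    ConvexOn ℝ univ (fun y => y * arctan (b * y)) := by
  have hderiv : deriv (fun y => y * arctan (b * y)) =
      fun x => arctan (b * x) + b * x / (1 + (b * x) ^ 2) :=
    funext fun x => (hasDerivAt_mul_arctan_const_mul b x).deriv
  refine Monotone.convexOn_univ_of_deriv
    (fun x => (hasDerivAt_mul_arctan_const_mul b x).differentiableAt) ?_
  rw [hderiv]
  exact monotone_of_hasDerivAt_nonneg (hasDerivAt_arctan_const_mul_add_div b)
    fun x => by positivity

lemma mul_arctan_integral_le_integral_mul_arctan {Ω : Type*} [MeasurableSpace Ω]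
    {μ : Measure Ω} [IsProbabilityMeasure μ] {X : Ω → ℝ} {b : ℝ} (hb : 0 ≤ b)
    (hX : Integrable X μ) (hXb : Integrable (fun ω => X ω * arctan (b * X ω)) μ) :
    (∫ ω, X ω ∂μ) * arctan (b * ∫ ω, X ω ∂μ) ≤ ∫ ω, X ω * arctan (b * X ω) ∂μ :=
  (convexOn_mul_arctan_const_mul hb).map_integral_le
    (by fun_prop) isClosed_univ (ae_of_all _ fun _ => mem_univ _) hX hXb

theorem laplace_jensen_bound_general {Ω : Type*} [MeasurableSpace Ω] (μ : Measure Ω)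
    [IsProbabilityMeasure μ] (P : Ω → ℝ)
    (s r₀ lam : ℝ) (hlam : 0 < lam)
    (hint1 : Integrable (fun ω => Real.sqrt (P ω)) μ)
    (hint2 : Integrable
      (fun ω => Real.sqrt (P ω) *
        Real.arctan (Real.sqrt s / r₀ ^ 2 * Real.sqrt (P ω))) μ) :
    Real.exp (-(Real.pi * lam * Real.sqrt s) *
        ∫ ω, Real.sqrt (P ω) * Real.arctan (Real.sqrt s / r₀ ^ 2 * Real.sqrt (P ω)) ∂μ) ≤
      Real.exp (-(Real.pi * lam * Real.sqrt s) *
        ((∫ ω, Real.sqrt (P ω) ∂μ) *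
          Real.arctan (Real.sqrt s / r₀ ^ 2 * ∫ ω, Real.sqrt (P ω) ∂μ))) := by
  have hjensen := mul_arctan_integral_le_integral_mul_arctan
    (by positivity : 0 ≤ √s / r₀ ^ 2) hint1 hint2
  exact exp_le_exp.2 <| mul_le_mul_of_nonpos_left hjensen <| neg_nonpos.2 <| by positivity

/-- Proposition 1 (Jensen bound on the Laplace transform of uplink intra-mode interference
seen by cell-edge users, η = 4): with `b = √s / r₀²`,
`exp(−πλ√s · E[√P · arctan(b√P)]) ≤ exp(−πλ√s · E[√P] · arctan(b · E[√P]))`. -/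
theorem laplace_jensen_bound {Ω : Type*} [MeasurableSpace Ω] (μ : Measure Ω)
    [IsProbabilityMeasure μ] (P : Ω → ℝ) (hP : ∀ ω, 0 ≤ P ω)
    (s r₀ lam : ℝ) (hs : 0 < s) (hr₀ : 0 < r₀) (hlam : 0 < lam)
    (hint1 : Integrable (fun ω => Real.sqrt (P ω)) μ)
    (hint2 : Integrable
      (fun ω => Real.sqrt (P ω) *
        Real.arctan (Real.sqrt s / r₀ ^ 2 * Real.sqrt (P ω))) μ) :
    Real.exp (-(Real.pi * lam * Real.sqrt s) *
        ∫ ω, Real.sqrt (P ω) * Real.arctan (Real.sqrt s / r₀ ^ 2 * Real.sqrt (P ω)) ∂μ) ≤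
      Real.exp (-(Real.pi * lam * Real.sqrt s) *
        ((∫ ω, Real.sqrt (P ω) ∂μ) *
          Real.arctan (Real.sqrt s / r₀ ^ 2 * ∫ ω, Real.sqrt (P ω) ∂μ))) :=
  laplace_jensen_bound_general μ P s r₀ lam hlam hint1 hint2
end

section
/- Let λ, ρ, P_M be positive reals and η > 2, and set T = π·λ·(P_M/ρ)^{2/η}. Then ∫₀^∞ (min(ρ·r^η, P_M))^{2/η} · 2πλ·r·e^{−πλr²} dr = (ρ^{2/η}/(πλ)) · (1 − (1 + T)·e^{−T}) + P_M^{2/η} · e^{−T}. -/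
/-!
Put `c = πλ` and `r₀ = (P_M/ρ)^{1/η}`. Below `r₀` the power `ρ r^η` is uncapped and its
`2/η`-th power is `ρ^{2/η} r²`; above `r₀` it is the constant `P_M`. The moment thus splits into
`ρ^{2/η} ∫₀^{r₀} r² · 2c r e^{-cr²} dr` and `P_M^{2/η} ∫_{r₀}^∞ 2c r e^{-cr²} dr`, which are
computed from the antiderivatives `-(r² + 1/c) e^{-cr²}` and `-e^{-cr²}`; note `c r₀² = T`.
-/

open Real MeasureTheory Filter Set Topology

lemma Real.min_rpow_of_nonneg {x y p : ℝ} (hx : 0 ≤ x) (hy : 0 ≤ y) (hp : 0 ≤ p) :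
    min x y ^ p = min (x ^ p) (y ^ p) := by
  rcases le_total x y with h | h
  · rw [min_eq_left h, min_eq_left (rpow_le_rpow hx h hp)]
  · rw [min_eq_right h, min_eq_right (rpow_le_rpow hy h hp)]

lemma Real.mul_rpow_rpow_two_div {ρ r η : ℝ} (hρ : 0 ≤ ρ) (hr : 0 ≤ r) (hη : η ≠ 0) :
    (ρ * r ^ η) ^ (2 / η) = ρ ^ (2 / η) * r ^ 2 := by
  rw [mul_rpow hρ (rpow_nonneg hr η), ← rpow_mul hr, mul_div_cancel₀ 2 hη, rpow_two]

lemma mul_sq_le_iff_le_sqrt {a b r : ℝ} (ha : 0 < a) (hb : 0 ≤ b) (hr : 0 ≤ r) :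
    a * r ^ 2 ≤ b ↔ r ≤ √(b / a) := by
  rw [le_sqrt hr (div_nonneg hb ha.le), le_div_iff₀ ha, mul_comm]

section GaussianMoments

variable {c : ℝ}

lemma hasDerivAt_exp_neg_mul_sq (c x : ℝ) :
    HasDerivAt (fun x => exp (-(c * x ^ 2))) (-(2 * c * x * exp (-(c * x ^ 2)))) x := by
  convert (((hasDerivAt_pow 2 x).const_mul c).fun_neg).exp using 1
  push_cast
  ring

lemma integrable_two_mul_mul_exp_neg_mul_sq (hc : 0 < c) :
    Integrable fun x => 2 * c * x * exp (-(c * x ^ 2)) := by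
  simpa [mul_assoc, neg_mul] using (integrable_mul_exp_neg_mul_sq hc).const_mul (2 * c)

lemma tendsto_exp_neg_mul_sq_atTop (hc : 0 < c) :
    Tendsto (fun x => exp (-(c * x ^ 2))) atTop (𝓝 0) :=
  tendsto_exp_atBot.comp <| tendsto_neg_atTop_atBot.comp <|
    (tendsto_pow_atTop two_ne_zero).const_mul_atTop hc

lemma integral_Ioi_two_mul_mul_exp_neg_mul_sq (hc : 0 < c) (a : ℝ) :
    ∫ x in Ioi a, 2 * c * x * exp (-(c * x ^ 2)) = exp (-(c * a ^ 2)) := by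
  simpa using integral_Ioi_of_hasDerivAt_of_tendsto' (a := a)
    (fun x _ => (hasDerivAt_exp_neg_mul_sq c x).fun_neg)
    (by simpa using (integrable_two_mul_mul_exp_neg_mul_sq hc).integrableOn)
    (tendsto_exp_neg_mul_sq_atTop hc).neg

/-- This is `γ(2, c a²) / c`, with `γ(2, T) = 1 - (1 + T) e^{-T}`. -/
lemma integral_cube_mul_exp_neg_mul_sq (hc : c ≠ 0) (a : ℝ) :
    ∫ x in (0)..a, 2 * c * x ^ 3 * exp (-(c * x ^ 2)) =
      (1 - (1 + c * a ^ 2) * exp (-(c * a ^ 2))) / c := by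
  have hderiv (x : ℝ) : HasDerivAt (fun x => -(x ^ 2 + 1 / c) * exp (-(c * x ^ 2)))
      (2 * c * x ^ 3 * exp (-(c * x ^ 2))) x := by
    refine (((hasDerivAt_pow 2 x).add_const (1 / c)).fun_neg.fun_mul
      (hasDerivAt_exp_neg_mul_sq c x)).congr_deriv ?_
    field_simp
    ring
  rw [intervalIntegral.integral_eq_sub_of_hasDerivAt (fun x _ => hderiv x)
    ((by fun_prop : Continuous fun x => 2 * c * x ^ 3 * exp (-(c * x ^ 2))).intervalIntegrable _ _)]
  field_simp
  simp
  ring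

end GaussianMoments

lemma integral_Ioi_min_mul_sq_mul_rayleigh {a b c : ℝ} (ha : 0 < a) (hb : 0 ≤ b) (hc : 0 < c) :
    ∫ r in Ioi 0, min (a * r ^ 2) b * (2 * c * r * exp (-(c * r ^ 2))) =
      a / c * (1 - (1 + c * (b / a)) * exp (-(c * (b / a)))) + b * exp (-(c * (b / a))) := by
  set r₀ := √(b / a)
  have hr₀ : r₀ ^ 2 = b / a := sq_sqrt (div_nonneg hb ha.le)
  have hint : Integrable fun r => min (a * r ^ 2) b * (2 * c * r * exp (-(c * r ^ 2))) := by
    refine (integrable_two_mul_mul_exp_neg_mul_sq hc).bdd_mul (c := b) (by fun_prop)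
      (ae_of_all _ fun r => ?_)
    rw [norm_of_nonneg (le_min (by positivity) hb)]
    exact min_le_right _ _
  rw [← intervalIntegral.integral_interval_add_Ioi' hint.intervalIntegrable hint.integrableOn]
  have hlow : ∫ r in (0)..r₀, min (a * r ^ 2) b * (2 * c * r * exp (-(c * r ^ 2))) =
      a * ∫ r in (0)..r₀, 2 * c * r ^ 3 * exp (-(c * r ^ 2)) := by
    rw [← intervalIntegral.integral_const_mul]
    refine intervalIntegral.integral_congr fun r hr => ?_
    rw [uIcc_of_le (sqrt_nonneg _)] at hr
    rw [min_eq_left ((mul_sq_le_iff_le_sqrt ha hb hr.1).2 hr.2)]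
    ring
  have hhigh : ∫ r in Ioi r₀, min (a * r ^ 2) b * (2 * c * r * exp (-(c * r ^ 2))) =
      b * ∫ r in Ioi r₀, 2 * c * r * exp (-(c * r ^ 2)) := by
    rw [← integral_const_mul]
    refine setIntegral_congr_fun measurableSet_Ioi fun r hr => ?_
    have hr' : r₀ < r := hr
    have hr_nonneg : 0 ≤ r := (sqrt_nonneg _).trans hr'.le
    rw [min_eq_right (not_le.1 ((mul_sq_le_iff_le_sqrt ha hb hr_nonneg).not.2 hr'.not_ge)).le]
  rw [hlow, hhigh, integral_cube_mul_exp_neg_mul_sq hc.ne',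
    integral_Ioi_two_mul_mul_exp_neg_mul_sq hc, hr₀]
  ring

/-- Equation (16) of the paper: the fractional moment `E[P_u^{2/η}]` of the uplink transmit
power `P_u = min(ρ r^η, P_M)` under Rayleigh nearest-BS distance density `2πλ r e^{−πλr²}`,
with `T = πλ (P_M/ρ)^{2/η}`, equals
`ρ^{2/η}/(πλ) · (1 − (1+T) e^{−T}) + P_M^{2/η} e^{−T}`. -/
theorem fractional_moment_uplink_power (lam ρ P_M η : ℝ)
    (hlam : 0 < lam) (hρ : 0 < ρ) (hPM : 0 < P_M) (hη : 2 < η) :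
    ∫ r in Set.Ioi (0 : ℝ),
        (min (ρ * r ^ η) P_M) ^ (2 / η) *
          (2 * Real.pi * lam * r * Real.exp (-(Real.pi * lam * r ^ 2))) =
      ρ ^ (2 / η) / (Real.pi * lam) *
          (1 - (1 + Real.pi * lam * (P_M / ρ) ^ (2 / η)) *
            Real.exp (-(Real.pi * lam * (P_M / ρ) ^ (2 / η)))) +
        P_M ^ (2 / η) * Real.exp (-(Real.pi * lam * (P_M / ρ) ^ (2 / η))) := by
  have hη₀ : 0 < η := by linarith
  have hintegrand : EqOn
      (fun r => (min (ρ * r ^ η) P_M) ^ (2 / η) *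
        (2 * π * lam * r * exp (-(π * lam * r ^ 2))))
      (fun r => min (ρ ^ (2 / η) * r ^ 2) (P_M ^ (2 / η)) *
        (2 * (π * lam) * r * exp (-(π * lam * r ^ 2)))) (Ioi 0) := by
    intro r (hr : 0 < r)
    dsimp only
    rw [min_rpow_of_nonneg (by positivity) hPM.le (by positivity),
      mul_rpow_rpow_two_div hρ.le hr.le hη₀.ne', mul_assoc 2]
  rw [setIntegral_congr_fun measurableSet_Ioi hintegrand,
    integral_Ioi_min_mul_sq_mul_rayleigh (by positivity) (by positivity) (by positivity),
    ← div_rpow hPM.le hρ.le]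
end

section
/- Let B_u, B, θ, λ, ρ, P_d be positive reals, let α ∈ (0, 1], and let c₀, c₁ ≥ 0. Define U(x) = √x·arctan(√x), K = (π²·λ/2)·√(θ·P_d/ρ), and the effective rates ℰ₁ = (B_u + α·B)·log₂(1 + θ)·exp(−U(θ) − K·c₁) and ℰ₀ = B_u·log₂(1 + θ)·exp(−U(θ) − K·c₀). Then ℰ₁ > ℰ₀ if and only if √(ρ/P_d) > π²·λ·√θ·(c₁ − c₀) / (2·ln((B_u + α·B)/B_u)). -/
open Real

/-! Cancelling the common positive factor `log₂(1 + θ) exp(−U(θ))` and taking logarithms, the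
comparison `ℰ₁ > ℰ₀` becomes `K (c₁ − c₀) < ln((B_u + αB)/B_u)`. Since `K` is inversely
proportional to `√(ρ/P_d)` and the logarithm is positive, this rearranges to the stated
threshold on `√(ρ/P_d)`. -/

lemma mul_exp_lt_mul_exp_iff {a b x y : ℝ} (ha : 0 < a) (hb : 0 < b) :
    b * exp y < a * exp x ↔ y - x < log (a / b) := by
  rw [lt_log_iff_exp_lt (div_pos ha hb), exp_sub, div_lt_div_iff₀ (exp_pos x) hb, mul_comm b]

lemma sqrt_mul_div_eq_sqrt_div_sqrt_div (x : ℝ) {y z : ℝ} (hyz : 0 ≤ z / y) :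
    √(x * y / z) = √x / √(z / y) := by
  rw [← div_div_eq_mul_div, sqrt_div' x hyz]

lemma one_lt_add_div_self {a b : ℝ} (ha : 0 < a) (hb : 0 < b) : 1 < (a + b) / a := by
  rw [one_lt_div ha]
  linarith

theorem alpha_duplex_rate_gain_condition_general (B_u B θ lam ρ P_d α c₀ c₁ : ℝ)
    (hBu : 0 < B_u) (hB : 0 < B) (hθ : 0 < θ) (hρ : 0 < ρ)
    (hPd : 0 < P_d) (hα : α ∈ Set.Ioc (0 : ℝ) 1) :
    ((B_u + α * B) * Real.logb 2 (1 + θ) *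
        Real.exp (-(Real.sqrt θ * Real.arctan (Real.sqrt θ))
          - Real.pi ^ 2 * lam / 2 * Real.sqrt (θ * P_d / ρ) * c₁) >
      B_u * Real.logb 2 (1 + θ) *
        Real.exp (-(Real.sqrt θ * Real.arctan (Real.sqrt θ))
          - Real.pi ^ 2 * lam / 2 * Real.sqrt (θ * P_d / ρ) * c₀)) ↔
    Real.sqrt (ρ / P_d) >
      Real.pi ^ 2 * lam * Real.sqrt θ * (c₁ - c₀) /
        (2 * Real.log ((B_u + α * B) / B_u)) := by
  have hαB : 0 < α * B := mul_pos hα.1 hB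
  have hlogb : 0 < logb 2 (1 + θ) := logb_pos one_lt_two (by linarith)
  have hgain : 0 < log ((B_u + α * B) / B_u) := log_pos (one_lt_add_div_self hBu hαB)
  have hs : 0 < √(ρ / P_d) := sqrt_pos.2 (div_pos hρ hPd)
  have hexponent : ∀ U : ℝ,
      (-U - π ^ 2 * lam / 2 * (√θ / √(ρ / P_d)) * c₀) -
        (-U - π ^ 2 * lam / 2 * (√θ / √(ρ / P_d)) * c₁) =
      π ^ 2 * lam * √θ * (c₁ - c₀) / 2 / √(ρ / P_d) := fun U => by ring
  rw [gt_iff_lt, gt_iff_lt, mul_right_comm B_u, mul_right_comm (B_u + α * B),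
    mul_lt_mul_iff_of_pos_right hlogb, mul_exp_lt_mul_exp_iff (by linarith) hBu,
    sqrt_mul_div_eq_sqrt_div_sqrt_div θ (div_pos hρ hPd).le, hexponent,
    div_lt_comm₀ hs hgain, div_div]

/-- The α-duplex uplink rate-gain condition of Section III-F (equation (42)): with
`U(x) = √x arctan √x` and `K = (π²λ/2)√(θ P_d/ρ)`, the α-duplex effective uplink rate
`ℰ₁ = (B_u + αB) log₂(1+θ) exp(−U(θ) − K c₁)` exceeds the half-duplex rate
`ℰ₀ = B_u log₂(1+θ) exp(−U(θ) − K c₀)` iff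
`√(ρ/P_d) > π²λ√θ (c₁ − c₀) / (2 ln((B_u + αB)/B_u))`. -/
theorem alpha_duplex_rate_gain_condition (B_u B θ lam ρ P_d α c₀ c₁ : ℝ)
    (hBu : 0 < B_u) (hB : 0 < B) (hθ : 0 < θ) (hlam : 0 < lam) (hρ : 0 < ρ)
    (hPd : 0 < P_d) (hα : α ∈ Set.Ioc (0 : ℝ) 1) (hc₀ : 0 ≤ c₀) (hc₁ : 0 ≤ c₁) :
    ((B_u + α * B) * Real.logb 2 (1 + θ) *
        Real.exp (-(Real.sqrt θ * Real.arctan (Real.sqrt θ))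
          - Real.pi ^ 2 * lam / 2 * Real.sqrt (θ * P_d / ρ) * c₁) >
      B_u * Real.logb 2 (1 + θ) *
        Real.exp (-(Real.sqrt θ * Real.arctan (Real.sqrt θ))
          - Real.pi ^ 2 * lam / 2 * Real.sqrt (θ * P_d / ρ) * c₀)) ↔
    Real.sqrt (ρ / P_d) >
      Real.pi ^ 2 * lam * Real.sqrt θ * (c₁ - c₀) /
        (2 * Real.log ((B_u + α * B) / B_u)) :=
  alpha_duplex_rate_gain_condition_general B_u B θ lam ρ P_d α c₀ c₁ hBu hB hθ hρ hPd hα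
end
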